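/- arXiv:1704.01825 — 5 statements merged into one kernel-verified Lean document; each statement's English description precedes it below -/
import Mathlib

section
/- The nonlinear Fourier system {e^{inθ_a(t)}}_{n ∈ ℤ} satisfies the Riesz basis inequalities in L²(𝕋): for any finitely supported sequence (c_k), ((1-|a|)/(1+|a|)) Σ_k |c_k|² ≤ (1/2π)∫_{-π}^{π} |Σ_k c_k e^{ikθ_a(x)}|² dx ≤ ((1+|a|)/(1-|a|)) Σ_k |c_k|². -/
open Real MeasureTheory

/-- The Poisson kernel associated with `a = |a| e^{i t_a}`. -/
noncomputable def poisson (a : ℂ) (ta : ℝ) (t : ℝ) : ℝ :=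
  (1 - ‖a‖ ^ 2) / (1 - 2 * ‖a‖ * Real.cos (t - ta) + ‖a‖ ^ 2)

lemma integral_exp_int (n : ℤ) :
    (∫ x : ℝ in (-π)..π, Complex.exp (Complex.I * n * x)) =
      if n = 0 then (2*π : ℂ) else 0 := by
  split_ifs with h
  · simp only [h, Int.cast_zero, mul_zero, zero_mul, Complex.exp_zero]
    simp [two_mul]
  · have hc : (Complex.I * n) ≠ 0 := by simp [Complex.I_ne_zero, h]
    rw [show (fun x : ℝ => Complex.exp (Complex.I * n * x)) = fun x : ℝ => Complex.exp ((Complex.I * n) * x) from rfl]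
    rw [integral_exp_mul_complex hc]
    have : Complex.exp (Complex.I * n * π) = Complex.exp (Complex.I * n * (-π : ℝ)) := by
      have h2 : Complex.I * n * (π : ℝ) = Complex.I * n * ((-π : ℝ)) + n * (2 * π * Complex.I) := by
        push_cast; ring
      rw [h2, Complex.exp_add, Complex.exp_int_mul_two_pi_mul_I, mul_one]
    rw [this, sub_self, zero_div]

lemma parseval (c : ℤ →₀ ℂ) :
    (∫ u : ℝ in (-π)..π, ‖∑ k ∈ c.support, c k * Complex.exp (Complex.I * k * u)‖^2) =
      2*π * ∑ k ∈ c.support, ‖c k‖^2 := by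
  set s := c.support with hs
  set F : ℝ → ℂ := fun u => ∑ k ∈ s, c k * Complex.exp (Complex.I * k * u) with hF
  have hpt : ∀ u : ℝ, F u * (starRingEnd ℂ) (F u) =
      ∑ j ∈ s, ∑ k ∈ s, (c j * (starRingEnd ℂ) (c k)) * Complex.exp (Complex.I * ((j : ℂ) - k) * u) := by
    intro u
    rw [hF]
    simp only [map_sum, map_mul, Finset.sum_mul_sum, ← Complex.exp_conj]
    refine Finset.sum_congr rfl fun j _ => Finset.sum_congr rfl fun k _ => ?_
    rw [mul_mul_mul_comm, ← Complex.exp_add]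
    congr 1
    simp [Complex.ext_iff]
    ring_nf
    simp
  have key : (∫ u : ℝ in (-π)..π, F u * (starRingEnd ℂ) (F u)) =
      ((2*π * ∑ k ∈ s, ‖c k‖^2 : ℝ) : ℂ) := by
    simp only [hpt]
    rw [intervalIntegral.integral_finset_sum]
    · have : ∀ j ∈ s, (∫ u : ℝ in (-π)..π,
          ∑ k ∈ s, (c j * (starRingEnd ℂ) (c k)) * Complex.exp (Complex.I * ((j : ℂ) - k) * u)) =
          (c j * (starRingEnd ℂ) (c j)) * (2*π : ℂ) := by
        intro j hj
        rw [intervalIntegral.integral_finset_sum]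
        · have h1 : ∀ k ∈ s, (∫ u : ℝ in (-π)..π,
              (c j * (starRingEnd ℂ) (c k)) * Complex.exp (Complex.I * ((j : ℂ) - k) * u)) =
              if k = j then (c j * (starRingEnd ℂ) (c j)) * (2*π : ℂ) else 0 := by
            intro k hk
            rw [intervalIntegral.integral_const_mul]
            have : ((j : ℂ) - k) = ((j - k : ℤ) : ℂ) := by push_cast; ring
            rw [this, integral_exp_int (j - k)]
            by_cases h : k = j <;> simp [h, sub_eq_zero]
            · intro h'; exact absurd h'.symm h
          rw [Finset.sum_congr rfl h1, Finset.sum_ite_eq' s j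
            (fun _ => (c j * (starRingEnd ℂ) (c j)) * (2*π : ℂ)), if_pos hj]
        · intro k hk
          exact (Continuous.intervalIntegrable (by continuity) _ _)
      rw [Finset.sum_congr rfl this]
      have h2 : ∀ j : ℤ, c j * (starRingEnd ℂ) (c j) = ((‖c j‖^2 : ℝ) : ℂ) := by
        intro j; rw [Complex.mul_conj']; norm_cast
      simp only [h2]
      push_cast
      rw [Finset.mul_sum]
      exact Finset.sum_congr rfl fun j _ => by ring
    · intro j hj
      refine Continuous.intervalIntegrable ?_ _ _
      exact continuous_finset_sum _ fun k _ => by continuity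
  have hnorm : ∀ u : ℝ, F u * (starRingEnd ℂ) (F u) = ((‖F u‖^2 : ℝ) : ℂ) := by
    intro u; rw [Complex.mul_conj']; norm_cast
  rw [← Complex.ofReal_inj, ← key]
  simp only [hnorm]
  rw [← intervalIntegral.integral_ofReal]

lemma poisson_bounds (a : ℂ) (ha : ‖a‖ < 1) (ta t : ℝ) :
    (1 - ‖a‖) / (1 + ‖a‖) ≤ poisson a ta t ∧ poisson a ta t ≤ (1 + ‖a‖) / (1 - ‖a‖) := by
  have hr0 : (0:ℝ) ≤ ‖a‖ := norm_nonneg a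
  set r := ‖a‖ with hr
  have hc1 : -1 ≤ Real.cos (t - ta) := neg_one_le_cos _
  have hc2 : Real.cos (t - ta) ≤ 1 := Real.cos_le_one _
  unfold poisson
  rw [← hr]
  set d := 1 - 2 * r * Real.cos (t - ta) + r ^ 2 with hd
  have hd1 : (1 - r)^2 ≤ d := by nlinarith
  have hd2 : d ≤ (1 + r)^2 := by nlinarith
  have hdpos : 0 < d := lt_of_lt_of_le (by nlinarith) hd1
  constructor
  · rw [div_le_div_iff₀ (by linarith) hdpos]
    nlinarith
  · rw [div_le_div_iff₀ hdpos (by linarith)]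
    nlinarith

lemma poisson_continuous (a : ℂ) (ha : ‖a‖ < 1) (ta : ℝ) : Continuous (poisson a ta) := by
  apply Continuous.div continuous_const (by continuity)
  intro t
  have hr0 : (0:ℝ) ≤ ‖a‖ := norm_nonneg a
  have hc2 : Real.cos (t - ta) ≤ 1 := Real.cos_le_one _
  nlinarith

theorem riesz_basis_inequalities_nonlinear_basis
    (a : ℂ) (ha : ‖a‖ < 1) (ta : ℝ) (hA : a = (‖a‖ : ℂ) * Complex.exp (Complex.I * (ta : ℂ)))
    (θ : ℝ → ℝ)
    (hθ : ∀ t : ℝ, Complex.exp (Complex.I * (θ t : ℂ)) =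
      (Complex.exp (Complex.I * (t : ℂ)) - a) /
        (1 - (starRingEnd ℂ) a * Complex.exp (Complex.I * (t : ℂ))))
    (hper : ∀ t : ℝ, θ (t + 2 * π) = θ t + 2 * π)
    (hderiv : ∀ t : ℝ, HasDerivAt θ (poisson a ta t) t)
    (c : ℤ →₀ ℂ) :
    ((1 - ‖a‖) / (1 + ‖a‖)) * ∑ k ∈ c.support, ‖c k‖ ^ 2 ≤
        (1 / (2 * π)) * ∫ x in (-π)..π,
          ‖∑ k ∈ c.support, c k * Complex.exp (Complex.I * (k : ℂ) * (θ x : ℂ))‖ ^ 2 ∧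
      (1 / (2 * π)) * (∫ x in (-π)..π,
          ‖∑ k ∈ c.support, c k * Complex.exp (Complex.I * (k : ℂ) * (θ x : ℂ))‖ ^ 2) ≤
        ((1 + ‖a‖) / (1 - ‖a‖)) * ∑ k ∈ c.support, ‖c k‖ ^ 2 := by
  set g : ℝ → ℝ := fun u => ‖∑ k ∈ c.support, c k * Complex.exp (Complex.I * k * u)‖^2 with hg
  have hgc : Continuous g := by
    apply Continuous.pow
    apply Continuous.norm
    exact continuous_finset_sum _ fun k _ =>
      continuous_const.mul (Complex.continuous_exp.comp (by fun_prop))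
  have hθc : Continuous θ := by
    rw [continuous_iff_continuousAt]; exact fun t => (hderiv t).continuousAt
  have hpc : Continuous (poisson a ta) := poisson_continuous a ha ta
  -- g is 2π-periodic
  have hgper : Function.Periodic g (2 * π) := by
    intro u
    simp only [hg]
    congr 2
    refine Finset.sum_congr rfl fun k _ => ?_
    congr 1
    have : Complex.I * k * ((u + 2*π : ℝ) : ℂ) = Complex.I * k * (u : ℝ) + k * (2*π*Complex.I) := by
      push_cast; ring
    rw [this, Complex.exp_add, Complex.exp_int_mul_two_pi_mul_I, mul_one]
  -- change of variables
  have hcov : (∫ x in (-π)..π, poisson a ta x • g (θ x)) = ∫ u in θ (-π)..θ π, g u :=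
    intervalIntegral.integral_comp_smul_deriv (fun x _ => hderiv x) hpc.continuousOn hgc
  have hθπ : θ π = θ (-π) + 2 * π := by
    have := hper (-π); rw [show -π + 2*π = π by ring] at this; exact this
  have hper_int : (∫ u in θ (-π)..θ π, g u) = ∫ u in (-π)..π, g u := by
    rw [hθπ]
    have := hgper.intervalIntegral_add_eq (θ (-π)) (-π)
    rw [this, show -π + 2*π = π by ring]
  have hpars : (∫ u in (-π)..π, g u) = 2*π * ∑ k ∈ c.support, ‖c k‖^2 := parseval c
  set S := ∑ k ∈ c.support, ‖c k‖^2 with hS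
  have hJ : (∫ x in (-π)..π, g (θ x) * poisson a ta x) = 2*π*S := by
    rw [show (fun x => g (θ x) * poisson a ta x) = fun x => poisson a ta x • g (θ x) by
      funext x; simp [smul_eq_mul, mul_comm]]
    rw [hcov, hper_int, hpars]
  set m := (1 - ‖a‖) / (1 + ‖a‖) with hm
  set M := (1 + ‖a‖) / (1 - ‖a‖) with hM
  have hr0 : (0:ℝ) ≤ ‖a‖ := norm_nonneg a
  have hmpos : 0 < m := div_pos (by linarith) (by linarith)
  have hMpos : 0 < M := div_pos (by linarith) (by linarith)
  have hmM : m * M = 1 := by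
    have h1 : (1:ℝ) - ‖a‖ ≠ 0 := by linarith
    have h2 : (1:ℝ) + ‖a‖ ≠ 0 := by linarith
    rw [hm, hM, div_mul_div_comm, mul_comm ((1:ℝ) - ‖a‖)]
    exact div_self (mul_ne_zero h2 h1)
  set I := ∫ x in (-π)..π, g (θ x) with hI
  have hintg : IntervalIntegrable (fun x => g (θ x)) volume (-π) π :=
    (hgc.comp hθc).intervalIntegrable _ _
  have hintgp : IntervalIntegrable (fun x => g (θ x) * poisson a ta x) volume (-π) π :=
    ((hgc.comp hθc).mul hpc).intervalIntegrable _ _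
  have hpi : (-π : ℝ) ≤ π := by linarith [pi_pos]
  have hlow : m * I ≤ 2*π*S := by
    rw [← hJ, hI, ← intervalIntegral.integral_const_mul]
    apply intervalIntegral.integral_mono_on hpi (hintg.const_mul m) hintgp
    intro x _
    have h1 := (poisson_bounds a ha ta x).1
    have h2 : 0 ≤ g (θ x) := by positivity
    calc m * g (θ x) ≤ poisson a ta x * g (θ x) := by nlinarith
    _ = g (θ x) * poisson a ta x := mul_comm _ _
  have hhigh : 2*π*S ≤ M * I := by
    rw [← hJ, hI, ← intervalIntegral.integral_const_mul]
    apply intervalIntegral.integral_mono_on hpi hintgp (hintg.const_mul M)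
    intro x _
    have h1 := (poisson_bounds a ha ta x).2
    have h2 : 0 ≤ g (θ x) := by positivity
    calc g (θ x) * poisson a ta x ≤ g (θ x) * M := by nlinarith
    _ = M * g (θ x) := mul_comm _ _
  have hπ : (0:ℝ) < π := pi_pos
  have h2π : (0:ℝ) < 2*π := by linarith
  constructor
  · have t1 := mul_le_mul_of_nonneg_left hhigh hmpos.le
    have t2 : m*(M*I) = I := by rw [← mul_assoc, hmM, one_mul]
    have key1 : 2*π*(m*S) ≤ I := by nlinarith
    calc m*S = 1/(2*π)*(2*π*(m*S)) := by field_simp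
    _ ≤ 1/(2*π)*I := by
      apply mul_le_mul_of_nonneg_left key1; positivity
  · have t1 := mul_le_mul_of_nonneg_left hlow hMpos.le
    have t2 : M*(m*I) = I := by rw [← mul_assoc, mul_comm M m, hmM, one_mul]
    have key2 : I ≤ 2*π*(M*S) := by nlinarith
    calc 1/(2*π)*I ≤ 1/(2*π)*(2*π*(M*S)) := by
          apply mul_le_mul_of_nonneg_left key2; positivity
    _ = M*S := by field_simp
end

section
/- Let f be continuous and 2π-periodic, F = f ∘ θ_a^{-1}. Then ‖F‖_∞ = ‖f‖_∞, and for 0 < p < ∞, ‖F‖_p ≤ ((1+|a|)/(1-|a|))^{1/p} ‖f‖_p, where ‖g‖_p = ((1/2π)∫_𝕋 |g|^p)^{1/p}. -/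
open Real MeasureTheory Set Function

/-! Substituting `t = θ x` turns `∫ |f (θ⁻¹ t)|^p dt` into `∫ |f x|^p θ' x dx`, over
`[θ⁻¹ (-π), θ⁻¹ (-π) + 2π]` since `θ` commutes with translation by `2π`; bounding `θ'` by
`(1 + |a|) / (1 - |a|)` and using the periodicity of `f` gives the `L^p` estimate. The sup norms
agree because `θ⁻¹` is a bijection. -/

theorem integral_le_mul_integral_comp_of_deriv_le {φ g : ℝ → ℝ} {M a b : ℝ}
    (hφd : Differentiable ℝ φ) (hφm : Monotone φ) (hM : ∀ x, deriv φ x ≤ M)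
    (hg0 : ∀ u, 0 ≤ g u) (hg : IntegrableOn (fun x => g (φ x)) (Icc a b)) (hab : a ≤ b) :
    ∫ u in φ a..φ b, g u ≤ M * ∫ x in a..b, g (φ x) := by
  rw [intervalIntegral.integral_of_le (hφm hab), intervalIntegral.integral_of_le hab,
    ← integral_Icc_eq_integral_Ioc, ← integral_Icc_eq_integral_Ioc,
    ← integral_Icc_deriv_smul_of_deriv_nonneg hφd.continuous.continuousOn
      (fun x _ => (hφd x).hasDerivAt) (fun x _ => hφm.deriv_nonneg) hab,
    ← integral_const_mul]
  refine integral_mono_of_nonneg (ae_of_all _ fun x => ?_) (hg.const_mul M)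
    (ae_of_all _ fun x => ?_)
  · exact mul_nonneg hφm.deriv_nonneg (hg0 _)
  · exact mul_le_mul_of_nonneg_right (hM x) (hg0 _)

theorem integral_comp_inverse_le_mul_integral_of_periodic {θ ψ g : ℝ → ℝ} {M T : ℝ}
    (hθd : Differentiable ℝ θ) (hθm : Monotone θ) (hM : ∀ x, deriv θ x ≤ M)
    (hθT : ∀ t, θ (t + T) = θ t + T) (hψθ : LeftInverse ψ θ) (hθψ : RightInverse ψ θ)
    (hg : Continuous g) (hg0 : ∀ u, 0 ≤ g u) (hgT : Periodic g T) (hT : 0 ≤ T) (c : ℝ) :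
    ∫ t in c..c + T, g (ψ t) ≤ M * ∫ t in c..c + T, g t := by
  have hc : θ (ψ c) = c := hθψ c
  have hcT : θ (ψ c + T) = c + T := by rw [hθT, hc]
  calc ∫ t in c..c + T, g (ψ t)
      = ∫ t in θ (ψ c)..θ (ψ c + T), g (ψ t) := by rw [hc, hcT]
    _ ≤ M * ∫ x in ψ c..ψ c + T, g (ψ (θ x)) :=
        integral_le_mul_integral_comp_of_deriv_le hθd hθm hM (fun u => hg0 _)
          (by simpa only [hψθ _] using hg.integrableOn_Icc) (by linarith)
    _ = M * ∫ t in c..c + T, g t := by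
        simp only [hψθ _, hgT.intervalIntegral_add_eq (ψ c) c]

theorem norms_of_composition_with_inverse_phase_general
    (a : ℂ)
    (θ : ℝ → ℝ) (hθm : StrictMono θ)
    (hper : ∀ t : ℝ, θ (t + 2 * π) = θ t + 2 * π)
    (hθd : Differentiable ℝ θ)
    (hbounds : ∀ t : ℝ, (1 - ‖a‖) / (1 + ‖a‖) ≤ deriv θ t ∧
      deriv θ t ≤ (1 + ‖a‖) / (1 - ‖a‖))
    (θinv : ℝ → ℝ) (hinv₁ : ∀ t, θinv (θ t) = t) (hinv₂ : ∀ t, θ (θinv t) = t)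
    (f : ℝ → ℂ) (hf : Continuous f) (hfper : Function.Periodic f (2 * π))
    (p : ℝ) (hp : 0 < p) :
    (⨆ x : ℝ, ‖f (θinv x)‖) = (⨆ x : ℝ, ‖f x‖) ∧
      ((1 / (2 * π)) * ∫ t in (-π)..π, ‖f (θinv t)‖ ^ p) ^ (1 / p) ≤
        ((1 + ‖a‖) / (1 - ‖a‖)) ^ (1 / p) *
          ((1 / (2 * π)) * ∫ t in (-π)..π, ‖f t‖ ^ p) ^ (1 / p) := by
  refine ⟨LeftInverse.surjective hinv₁ |>.iSup_comp fun x => ‖f x‖, ?_⟩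
  have hM : 0 ≤ (1 + ‖a‖) / (1 - ‖a‖) := hθm.monotone.deriv_nonneg.trans (hbounds 0).2
  have hpi : -π ≤ π := by linarith [pi_pos]
  have hLp := integral_comp_inverse_le_mul_integral_of_periodic hθd hθm.monotone
    (fun t => (hbounds t).2) hper hinv₁ hinv₂ (hf.norm.rpow_const fun _ => Or.inr hp.le)
    (fun u => by positivity) (fun u => by simp only [hfper u]) two_pi_pos.le (-π)
  rw [show -π + 2 * π = π by ring] at hLp
  have hF0 : 0 ≤ ∫ t in (-π)..π, ‖f (θinv t)‖ ^ p :=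
    intervalIntegral.integral_nonneg hpi fun t _ => by positivity
  have hf0 : 0 ≤ ∫ t in (-π)..π, ‖f t‖ ^ p :=
    intervalIntegral.integral_nonneg hpi fun t _ => by positivity
  calc _ ≤ ((1 + ‖a‖) / (1 - ‖a‖) * ((1 / (2 * π)) * ∫ t in (-π)..π, ‖f t‖ ^ p)) ^ (1 / p) := by
        refine rpow_le_rpow (by positivity) ?_ (by positivity)
        rw [mul_left_comm]
        gcongr
    _ = _ := mul_rpow hM (by positivity)

theorem norms_of_composition_with_inverse_phase
    (a : ℂ) (ha : ‖a‖ < 1)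
    (θ : ℝ → ℝ) (hθc : Continuous θ) (hθm : StrictMono θ)
    (hper : ∀ t : ℝ, θ (t + 2 * π) = θ t + 2 * π)
    (hθd : Differentiable ℝ θ)
    (hbounds : ∀ t : ℝ, (1 - ‖a‖) / (1 + ‖a‖) ≤ deriv θ t ∧
      deriv θ t ≤ (1 + ‖a‖) / (1 - ‖a‖))
    (θinv : ℝ → ℝ) (hinv₁ : ∀ t, θinv (θ t) = t) (hinv₂ : ∀ t, θ (θinv t) = t)
    (f : ℝ → ℂ) (hf : Continuous f) (hfper : Function.Periodic f (2 * π))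
    (p : ℝ) (hp : 0 < p) :
    (⨆ x : ℝ, ‖f (θinv x)‖) = (⨆ x : ℝ, ‖f x‖) ∧
      ((1 / (2 * π)) * ∫ t in (-π)..π, ‖f (θinv t)‖ ^ p) ^ (1 / p) ≤
        ((1 + ‖a‖) / (1 - ‖a‖)) ^ (1 / p) *
          ((1 / (2 * π)) * ∫ t in (-π)..π, ‖f t‖ ^ p) ^ (1 / p) :=
  norms_of_composition_with_inverse_phase_general a θ hθm hper hθd hbounds θinv hinv₁ hinv₂ f hf
    hfper p hp
end

section
/- (Riemann–Lebesgue lemma for nonlinear Fourier coefficients) For f ∈ L¹(𝕋), the nonlinear Fourier coefficients c_k^a(f) = (1/2π)∫_{-π}^{π} f(t)e^{-ikθ_a(t)} p_a(t) dt tend to 0 as |k| → ∞. -/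
open Real MeasureTheory Filter

/-- The `k`-th nonlinear Fourier coefficient of `f`. -/
noncomputable def coeff (θ p : ℝ → ℝ) (f : ℝ → ℂ) (k : ℤ) : ℂ :=
  (1 / (2 * π)) * ∫ t in (-π)..π,
    f t * Complex.exp (-(Complex.I * (k : ℂ) * (θ t : ℂ))) * (p t : ℂ)

/-!
The substitution `v = θ t` is a change of variables with Jacobian `θ' = p_a ≥ 0`, so it turns
`c_k^a(f)` into the ordinary Fourier integral, at frequency `k`, of `f ∘ θ⁻¹` restricted to
`θ '' (-π, π]`; the classical Riemann–Lebesgue lemma then gives the decay.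
-/

theorem Real.tendsto_setIntegral_exp_mul_cocompact {S : Set ℝ} (hS : MeasurableSet S)
    (g : ℝ → ℂ) :
    Tendsto (fun w : ℝ => ∫ v in S, Complex.exp (-(Complex.I * w * v)) * g v) (cocompact ℝ)
      (nhds 0) := by
  have h2π : (2 * π)⁻¹ ≠ 0 := by positivity
  refine ((Real.tendsto_integral_exp_smul_cocompact (S.indicator g)).comp
    (tendsto_cocompact_mul_right₀ h2π)).congr fun w => ?_
  rw [Function.comp_apply, ← integral_indicator hS]
  congr 1 with v
  by_cases hv : v ∈ S
  · simp only [Set.indicator_of_mem hv, Circle.smul_def, Real.fourierChar_apply, smul_eq_mul]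
    congr 2
    push_cast
    field_simp
  · simp [Set.indicator_of_notMem hv]

theorem setIntegral_comp_mul_deriv_of_strictMono {θ θ' : ℝ → ℝ} (hθ : StrictMono θ)
    (hderiv : ∀ t, HasDerivAt θ (θ' t) t) {s : Set ℝ} (hs : MeasurableSet s) (g : ℝ → ℂ) :
    ∫ t in s, g (θ t) * θ' t = ∫ v in θ '' s, g v := by
  rw [integral_image_eq_integral_abs_deriv_smul hs (fun t _ => (hderiv t).hasDerivWithinAt)
    hθ.injective.injOn]
  congr 1 with t
  rw [abs_of_nonneg ((hderiv t).nonneg_of_monotone hθ.monotone), Complex.real_smul, mul_comm]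

theorem tendsto_setIntegral_mul_exp_mul_deriv_cocompact {θ θ' : ℝ → ℝ} (hθ : StrictMono θ)
    (hderiv : ∀ t, HasDerivAt θ (θ' t) t) {s : Set ℝ} (hs : MeasurableSet s) (f : ℝ → ℂ) :
    Tendsto (fun w : ℝ => ∫ t in s, f t * Complex.exp (-(Complex.I * w * θ t)) * θ' t)
      (cocompact ℝ) (nhds 0) := by
  have hθs : MeasurableSet (θ '' s) := measurable_image_of_fderivWithin hs
    (fun t _ => (hderiv t).hasDerivWithinAt.hasFDerivWithinAt) hθ.injective.injOn
  refine (Real.tendsto_setIntegral_exp_mul_cocompact hθs (f ∘ Function.invFun θ)).congr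
    fun w => ?_
  rw [← setIntegral_comp_mul_deriv_of_strictMono hθ hderiv hs]
  congr 1 with t
  rw [Function.comp_apply, Function.leftInverse_invFun hθ.injective t]
  ring

theorem riemann_lebesgue_nonlinear_coefficients_general
    (a : ℂ) (ta : ℝ)
    (θ : ℝ → ℝ) (hθm : StrictMono θ)
    (hderiv : ∀ t : ℝ, HasDerivAt θ (poisson a ta t) t)
    (f : ℝ → ℂ) :
    Tendsto (fun k : ℤ => coeff θ (poisson a ta) f k) (Filter.cocompact ℤ) (nhds 0) := by
  have hlim := ((tendsto_setIntegral_mul_exp_mul_deriv_cocompact hθm hderiv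
    (measurableSet_Ioc (a := -π) (b := π)) f).comp
    Real.isClosedEmbedding_intCast.tendsto_cocompact).const_mul (1 / (2 * π) : ℂ)
  rw [mul_zero] at hlim
  refine hlim.congr fun k => ?_
  rw [coeff, intervalIntegral.integral_of_le (by linarith [Real.pi_pos])]
  simp

theorem riemann_lebesgue_nonlinear_coefficients
    (a : ℂ) (ha : ‖a‖ < 1) (ta : ℝ) (hA : a = (‖a‖ : ℂ) * Complex.exp (Complex.I * (ta : ℂ)))
    (θ : ℝ → ℝ) (hθc : Continuous θ) (hθm : StrictMono θ)
    (hper : ∀ t : ℝ, θ (t + 2 * π) = θ t + 2 * π)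
    (hderiv : ∀ t : ℝ, HasDerivAt θ (poisson a ta t) t)
    (f : ℝ → ℂ) (hfm : Measurable f) (hfper : Function.Periodic f (2 * π))
    (hfi : IntervalIntegrable f MeasureTheory.volume (-π) π) :
    Tendsto (fun k : ℤ => coeff θ (poisson a ta) f k) (Filter.cocompact ℤ) (nhds 0) :=
  riemann_lebesgue_nonlinear_coefficients_general a ta θ hθm hderiv f
end

section
/- If f ∈ L¹(𝕋) and F = f∘θ_a^{-1} is Hölder continuous of order α > 0 (|F(x)-F(y)| ≤ M|x-y|^α), then S_n^a(f)(x) → f(x) for every x as n → ∞. -/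
open Real MeasureTheory Filter

/-- The `n`-th partial sum of the nonlinear Fourier series of `f`. -/
noncomputable def partialSum (θ p : ℝ → ℝ) (f : ℝ → ℂ) (n : ℕ) (x : ℝ) : ℂ :=
  ∑ k ∈ Finset.Icc (-(n : ℤ)) (n : ℤ),
    coeff θ p f k * Complex.exp (Complex.I * (k : ℂ) * (θ x : ℂ))

/-!
Substituting `u = θ t` (where `θ' = poisson a ta` and `θ (t + 2π) = θ t + 2π`) turns
`S_n^a f (x)` into the classical Dirichlet integral `(1/2π) ∫ F (θ x - t) D_n(t) dt` of
`F = f ∘ θ⁻¹` at `θ x`. Since `D_n(t) sin (t/2) = sin ((n + 1/2) t)`, the error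
`S_n^a f (x) - f x` is a sine integral of `(F (θ x - t) - F (θ x)) / sin (t/2)`, which tends to `0`
by the Riemann–Lebesgue lemma as soon as this quotient is integrable (Dini's test). Hölder
continuity of order `α` bounds the quotient by a multiple of `|t| ^ (α - 1)`, which is integrable.
-/

open Set Topology

noncomputable def dirichletKernel (n : ℕ) (t : ℝ) : ℂ :=
  ∑ k ∈ Finset.Icc (-(n : ℤ)) n, Complex.exp (Complex.I * k * t)

theorem continuous_dirichletKernel (n : ℕ) : Continuous (dirichletKernel n) := by
  unfold dirichletKernel
  fun_prop

theorem dirichletKernel_periodic (n : ℕ) : Function.Periodic (dirichletKernel n) (2 * π) :=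
  fun _ => Finset.sum_congr rfl fun k _ =>
    Complex.exp_eq_exp_iff_exists_int.2 ⟨k, by push_cast; ring⟩

theorem dirichletKernel_succ (n : ℕ) (t : ℝ) :
    dirichletKernel (n + 1) t = dirichletKernel n t + 2 * Complex.cos ((n + 1) * t) := by
  have hIcc : Finset.Icc (-((n : ℤ) + 1)) (n + 1) =
      insert (-((n : ℤ) + 1)) (insert ((n : ℤ) + 1) (Finset.Icc (-(n : ℤ)) n)) := by
    ext k
    simp only [Finset.mem_Icc, Finset.mem_insert]
    omega
  rw [dirichletKernel, dirichletKernel, Nat.cast_succ, hIcc, Finset.sum_insert (by simp; omega),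
    Finset.sum_insert (by simp), Complex.cos]
  push_cast
  ring_nf

theorem dirichletKernel_mul_sin_half (n : ℕ) (t : ℝ) :
    dirichletKernel n t * Real.sin (t / 2) = Real.sin ((n + 1 / 2) * t) := by
  push_cast
  induction n with
  | zero =>
    simp only [dirichletKernel, Nat.cast_zero, neg_zero, Finset.Icc_self, Finset.sum_singleton,
      Int.cast_zero, mul_zero, zero_mul, Complex.exp_zero, one_mul]
    ring_nf
  | succ n ih =>
    have h₁ : ((n : ℂ) + 1 / 2) * t = (n + 1) * t - t / 2 := by ring
    have h₂ : ((n + 1 : ℕ) + 1 / 2 : ℂ) * t = (n + 1) * t + t / 2 := by push_cast; ring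
    rw [dirichletKernel_succ, add_mul, ih, h₁, h₂, Complex.sin_sub, Complex.sin_add]
    ring

theorem integral_exp_I_mul_int_eq_zero {k : ℤ} (hk : k ≠ 0) :
    ∫ t in -π..π, Complex.exp (Complex.I * k * t) = 0 := by
  rw [integral_exp_mul_complex (by simp [hk]), sub_eq_zero.2, zero_div]
  exact Complex.exp_eq_exp_iff_exists_int.2 ⟨k, by push_cast; ring⟩

theorem integral_dirichletKernel (n : ℕ) : ∫ t in -π..π, dirichletKernel n t = 2 * π := by
  unfold dirichletKernel
  rw [intervalIntegral.integral_finsetSum fun k _ => by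
      apply Continuous.intervalIntegrable; fun_prop,
    Finset.sum_eq_single_of_mem 0 (by simp) fun k _ => integral_exp_I_mul_int_eq_zero]
  simp only [Int.cast_zero, mul_zero, zero_mul, Complex.exp_zero, intervalIntegral.integral_const,
    Complex.real_smul, mul_one]
  push_cast
  ring

theorem tendsto_integral_sin_mul_smul_cocompact {g : ℝ → ℂ} (hg : Integrable g) :
    Tendsto (fun r : ℝ => ∫ t, Real.sin (r * t) • g t) (cocompact ℝ) (𝓝 0) := by
  have hc : (2 * π)⁻¹ ≠ 0 := by positivity
  have hRL := Real.tendsto_integral_exp_smul_cocompact g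
  -- `sin (r t) = (2i)⁻¹ (𝐞 (t r / 2π) - 𝐞 (-(t r / 2π)))`
  have h := ((hRL.comp (tendsto_cocompact_mul_left₀ (neg_ne_zero.2 hc))).sub
    (hRL.comp (tendsto_cocompact_mul_left₀ hc))).const_smul (2 * Complex.I)⁻¹
  rw [sub_zero, smul_zero] at h
  refine h.congr fun r => ?_
  have hint (w : ℝ) : Integrable fun v : ℝ => Real.fourierChar (-(v * w)) • g v := by
    simpa [mul_comm] using (Real.fourierIntegral_convergent_iff w).2 hg
  rw [Function.comp_apply, Function.comp_apply, ← integral_sub (hint _) (hint _),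
    ← integral_smul]
  refine integral_congr_ae (Eventually.of_forall fun t => ?_)
  simp only [Circle.smul_def, Real.fourierChar_apply, Complex.real_smul, smul_eq_mul,
    Complex.ofReal_sin, Complex.sin]
  field_simp
  rw [Complex.I_sq]
  push_cast
  ring_nf

theorem tendsto_integral_mul_dirichletKernel {g : ℝ → ℂ}
    (hg : IntegrableOn (fun t => g t / Real.sin (t / 2)) (Ioo (-π) π)) :
    Tendsto (fun n : ℕ => ∫ t in -π..π, g t * dirichletKernel n t) atTop (𝓝 0) := by
  have hn : Tendsto (fun n : ℕ => (n : ℝ) + 1 / 2) atTop (cocompact ℝ) :=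
    (tendsto_atTop_add_const_right _ _ tendsto_natCast_atTop_atTop).mono_right
      atTop_le_cocompact
  refine ((tendsto_integral_sin_mul_smul_cocompact
    ((integrable_indicator_iff measurableSet_Ioo).2 hg)).comp hn).congr fun n => ?_
  rw [Function.comp_apply, intervalIntegral.integral_of_le (by linarith [pi_pos]),
    integral_Ioc_eq_integral_Ioo, ← integral_indicator measurableSet_Ioo]
  refine integral_congr_ae ((Measure.ae_ne volume 0).mono fun t ht0 => ?_)
  by_cases ht : t ∈ Ioo (-π) π
  · have hsin : (Real.sin (t / 2) : ℂ) ≠ 0 := by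
      rw [Complex.ofReal_ne_zero, Ne, sin_eq_zero_iff_of_lt_of_lt (by linarith [ht.1, pi_pos])
        (by linarith [ht.2, pi_pos])]
      exact div_ne_zero ht0 two_ne_zero
    simp only [indicator_of_mem ht, Complex.real_smul, ← dirichletKernel_mul_sin_half]
    field_simp
  · simp only [indicator_of_notMem ht, smul_zero]

theorem abs_div_pi_le_abs_sin_half {t : ℝ} (ht : |t| ≤ π) : |t| / π ≤ |Real.sin (t / 2)| := by
  have h := mul_abs_le_abs_sin (x := t / 2) (by rw [abs_div, abs_two]; linarith)
  rw [abs_div, abs_two] at h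
  calc |t| / π = 2 / π * (|t| / 2) := by field_simp
    _ ≤ _ := h

theorem integrableOn_div_sin_half_of_norm_le_rpow {g : ℝ → ℂ} {M α : ℝ} (hα : 0 < α)
    (hg : AEStronglyMeasurable g) (hbound : ∀ t ∈ Ioo (-π) π, ‖g t‖ ≤ M * |t| ^ α) :
    IntegrableOn (fun t => g t / Real.sin (t / 2)) (Ioo (-π) π) := by
  have hball : Metric.ball (0 : ℝ) π = Ioo (-π) π := by simp [Real.ball_eq_Ioo]
  have hsin : Measurable fun t : ℝ => (Real.sin (t / 2) : ℂ) := by fun_prop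
  rw [← hball]
  refine integrableOn_ball_of_norm_le_rpow (C := π * M) (α := 1 - α) (by simp) (by simpa) ?_
    (hg.aemeasurable.div hsin.aemeasurable).aestronglyMeasurable
  rw [hball]
  filter_upwards [ae_restrict_mem measurableSet_Ioo, ae_restrict_of_ae (Measure.ae_ne volume 0)]
    with t ht ht0
  have hpos : 0 < |t| / π := div_pos (abs_pos.2 ht0) pi_pos
  calc ‖g t / Real.sin (t / 2)‖ ≤ M * |t| ^ α / (|t| / π) := by
        rw [norm_div, Complex.norm_real, Real.norm_eq_abs]
        exact div_le_div₀ ((norm_nonneg _).trans (hbound t ht)) (hbound t ht) hpos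
          (abs_div_pi_le_abs_sin_half (abs_le.2 ⟨ht.1.le, ht.2.le⟩))
    _ = π * M * ‖t‖ ^ (-(1 - α)) := by
        rw [Real.norm_eq_abs, neg_sub, rpow_sub (abs_pos.2 ht0), rpow_one]
        field_simp

theorem partialSum_eq_integral {θ p : ℝ → ℝ} {f : ℝ → ℂ} (hθ : Continuous θ)
    (hp : Continuous p) (hf : Continuous f) (n : ℕ) (x : ℝ) :
    partialSum θ p f n x =
      1 / (2 * π) * ∫ t in -π..π, p t • (f t * dirichletKernel n (θ x - θ t)) := by
  have hint (k : ℤ) : IntervalIntegrable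
      (fun t => f t * Complex.exp (-(Complex.I * k * θ t)) * p t) volume (-π) π := by
    apply Continuous.intervalIntegrable
    fun_prop
  simp only [partialSum, coeff, mul_assoc (1 / (2 * (π : ℂ))), ← Finset.mul_sum,
    ← intervalIntegral.integral_mul_const,
    ← intervalIntegral.integral_finsetSum fun k _ => (hint k).mul_const _]
  congr 1
  refine intervalIntegral.integral_congr fun t _ => ?_
  simp only [dirichletKernel, Complex.real_smul, Finset.mul_sum]
  refine Finset.sum_congr rfl fun k _ => ?_
  rw [Complex.ofReal_sub, mul_sub, sub_eq_add_neg, Complex.exp_add]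
  ring

theorem integral_deriv_smul_comp_of_periodic {E : Type*} [NormedAddCommGroup E]
    [NormedSpace ℝ E] [CompleteSpace E] {θ p : ℝ → ℝ} {G : ℝ → E} {T : ℝ}
    (hθ : ∀ t, HasDerivAt θ (p t) t) (hp : Continuous p) (hθper : ∀ t, θ (t + T) = θ t + T)
    (hG : Continuous G) (hGper : Function.Periodic G T) (a : ℝ) :
    ∫ t in a..a + T, p t • G (θ t) = ∫ u in a..a + T, G u := by
  have h := intervalIntegral.integral_deriv_smul_comp (a := a) (b := a + T) (fun t _ => hθ t)
    hp.continuousOn hG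
  rwa [hθper, hGper.intervalIntegral_add_eq] at h

theorem integral_mul_comp_sub_of_periodic {F D : ℝ → ℂ} {T : ℝ} (hF : Function.Periodic F T)
    (hD : Function.Periodic D T) (a y : ℝ) :
    ∫ u in a..a + T, F u * D (y - u) = ∫ t in a..a + T, F (y - t) * D t := by
  have hper : Function.Periodic (fun u => F u * D (y - u)) T := hF.mul (hD.const_sub y)
  calc ∫ u in a..a + T, F u * D (y - u)
      = ∫ u in y - (a + T)..y - (a + T) + T, F u * D (y - u) := hper.intervalIntegral_add_eq _ _
    _ = ∫ t in a..a + T, F (y - t) * D (y - (y - t)) := by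
        rw [intervalIntegral.integral_comp_sub_left (fun u => F u * D (y - u)),
          show y - (a + T) + T = y - a by ring]
    _ = _ := by simp only [sub_sub_cancel]

theorem partialSum_comp_eq_integral_dirichletKernel {θ p : ℝ → ℝ} {F : ℝ → ℂ}
    (hθ : ∀ t, HasDerivAt θ (p t) t) (hp : Continuous p)
    (hθper : ∀ t, θ (t + 2 * π) = θ t + 2 * π) (hF : Continuous F)
    (hFper : Function.Periodic F (2 * π)) (n : ℕ) (x : ℝ) :
    partialSum θ p (F ∘ θ) n x =
      1 / (2 * π) * ∫ t in -π..π, F (θ x - t) * dirichletKernel n t := by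
  have hθc : Continuous θ := continuous_iff_continuousAt.2 fun t => (hθ t).continuousAt
  have hD := continuous_dirichletKernel n
  have hD_per := dirichletKernel_periodic n
  have hsubst := integral_deriv_smul_comp_of_periodic hθ hp hθper (by fun_prop)
    (hFper.mul (hD_per.const_sub (θ x))) (-π)
  have hconv := integral_mul_comp_sub_of_periodic hFper hD_per (-π) (θ x)
  rw [show -π + 2 * π = π by ring] at hsubst hconv
  rw [partialSum_eq_integral hθc hp (hF.comp hθc), ← hconv]
  exact congrArg _ hsubst

theorem partialSum_comp_sub_eq_integral {θ p : ℝ → ℝ} {F : ℝ → ℂ}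
    (hθ : ∀ t, HasDerivAt θ (p t) t) (hp : Continuous p)
    (hθper : ∀ t, θ (t + 2 * π) = θ t + 2 * π) (hF : Continuous F)
    (hFper : Function.Periodic F (2 * π)) (n : ℕ) (x : ℝ) :
    partialSum θ p (F ∘ θ) n x - F (θ x) =
      1 / (2 * π) * ∫ t in -π..π, (F (θ x - t) - F (θ x)) * dirichletKernel n t := by
  have hD := continuous_dirichletKernel n
  rw [partialSum_comp_eq_integral_dirichletKernel hθ hp hθper hF hFper]
  simp only [sub_mul]
  rw [intervalIntegral.integral_sub (by apply Continuous.intervalIntegrable; fun_prop)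
      (by apply Continuous.intervalIntegrable; fun_prop),
    intervalIntegral.integral_const_mul, integral_dirichletKernel]
  field_simp

theorem tendsto_partialSum_comp_of_integrableOn {θ p : ℝ → ℝ} {F : ℝ → ℂ}
    (hθ : ∀ t, HasDerivAt θ (p t) t) (hp : Continuous p)
    (hθper : ∀ t, θ (t + 2 * π) = θ t + 2 * π) (hF : Continuous F)
    (hFper : Function.Periodic F (2 * π)) {x : ℝ}
    (hdini : IntegrableOn (fun t => (F (θ x - t) - F (θ x)) / Real.sin (t / 2))
      (Ioo (-π) π)) :
    Tendsto (fun n => partialSum θ p (F ∘ θ) n x) atTop (𝓝 (F (θ x))) := by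
  rw [← tendsto_sub_nhds_zero_iff]
  simpa only [partialSum_comp_sub_eq_integral hθ hp hθper hF hFper, mul_zero] using
    (tendsto_integral_mul_dirichletKernel hdini).const_mul (1 / (2 * π : ℂ))

theorem continuous_poisson {a : ℂ} (ha : ‖a‖ < 1) (ta : ℝ) : Continuous (poisson a ta) := by
  refine continuous_const.div (by fun_prop) fun t => ne_of_gt ?_
  nlinarith [mul_le_mul_of_nonneg_left (cos_le_one (t - ta)) (norm_nonneg a)]

theorem continuous_of_norm_sub_le_rpow {E : Type*} [SeminormedAddCommGroup E] {F : ℝ → E}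
    {M α : ℝ} (hα : 0 < α) (hF : ∀ x y, ‖F x - F y‖ ≤ M * |x - y| ^ α) : Continuous F := by
  refine continuous_iff_continuousAt.2 fun y => tendsto_iff_norm_sub_tendsto_zero.2 ?_
  refine squeeze_zero (fun _ => norm_nonneg _) (fun x => hF x y) ?_
  have h : Continuous fun x => M * |x - y| ^ α := by fun_prop (disch := exact hα.le)
  simpa [zero_rpow hα.ne'] using h.tendsto y

theorem holder_implies_pointwise_convergence_general
    (a : ℂ) (ha : ‖a‖ < 1) (ta : ℝ)
    (θ : ℝ → ℝ)
    (hper : ∀ t : ℝ, θ (t + 2 * π) = θ t + 2 * π)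
    (hderiv : ∀ t : ℝ, HasDerivAt θ (poisson a ta t) t)
    (θinv : ℝ → ℝ) (hinv₁ : ∀ t, θinv (θ t) = t) (hinv₂ : ∀ t, θ (θinv t) = t)
    (f : ℝ → ℂ) (hfper : Function.Periodic f (2 * π))
    (F : ℝ → ℂ) (hF : F = f ∘ θinv)
    (M α : ℝ) (hα : 0 < α)
    (hHolder : ∀ x y : ℝ, ‖F x - F y‖ ≤ M * |x - y| ^ α) :
    ∀ x : ℝ,
      Tendsto (fun n : ℕ => partialSum θ (poisson a ta) f n x) atTop (nhds (f x)) := by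
  intro x
  have hf : f = F ∘ θ := funext fun t => by simp [hF, hinv₁]
  have hθinv_per (u : ℝ) : θinv (u + 2 * π) = θinv u + 2 * π := by
    rw [← hinv₁ (θinv u + 2 * π), hper, hinv₂]
  have hFper : Function.Periodic F (2 * π) := fun u => by
    simp only [hF, Function.comp_apply, hθinv_per, hfper _]
  have hFc := continuous_of_norm_sub_le_rpow hα hHolder
  have hdini := integrableOn_div_sin_half_of_norm_le_rpow (g := fun t => F (θ x - t) - F (θ x))
    hα (by fun_prop : Continuous _).aestronglyMeasurable fun t _ => by
      simpa [abs_sub_comm] using hHolder (θ x - t) (θ x)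
  rw [hf]
  exact tendsto_partialSum_comp_of_integrableOn hderiv (continuous_poisson ha ta) hper
    hFc hFper hdini

theorem holder_implies_pointwise_convergence
    (a : ℂ) (ha : ‖a‖ < 1) (ta : ℝ) (hA : a = (‖a‖ : ℂ) * Complex.exp (Complex.I * (ta : ℂ)))
    (θ : ℝ → ℝ) (hθc : Continuous θ) (hθm : StrictMono θ)
    (hper : ∀ t : ℝ, θ (t + 2 * π) = θ t + 2 * π)
    (hderiv : ∀ t : ℝ, HasDerivAt θ (poisson a ta t) t)
    (θinv : ℝ → ℝ) (hinv₁ : ∀ t, θinv (θ t) = t) (hinv₂ : ∀ t, θ (θinv t) = t)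
    (f : ℝ → ℂ) (hfm : Measurable f) (hfper : Function.Periodic f (2 * π))
    (hfi : IntervalIntegrable f MeasureTheory.volume (-π) π)
    (F : ℝ → ℂ) (hF : F = f ∘ θinv)
    (M α : ℝ) (hα : 0 < α)
    (hHolder : ∀ x y : ℝ, ‖F x - F y‖ ≤ M * |x - y| ^ α) :
    ∀ x : ℝ,
      Tendsto (fun n : ℕ => partialSum θ (poisson a ta) f n x) atTop (nhds (f x)) :=
  holder_implies_pointwise_convergence_general a ha ta θ hper hderiv θinv hinv₁ hinv₂ f hfper F hF M
    α hα hHolder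
end

section
/- (Fejér theorem for nonlinear Fourier series) If f is continuous and 2π-periodic, then the nonlinear Fejér means converge uniformly: ‖f - σ_n^a(f)‖_∞ → 0 as n → ∞. -/
/-!
The substitution `u = θ t`, with `du = p t dt` and `θ (t + 2π) = θ t + 2π`, turns the nonlinear
coefficients of `f` into the classical Fourier coefficients of `F = f ∘ θ⁻¹`, so the nonlinear
Fejér mean of `f` at `x` is the classical Fejér mean of `F` at `θ x`; as `θ` is onto, the two
sup-norm errors coincide. Since `θ` is monotone, `p ≥ 0` and the substitution needs no regularity
of `p`. The classical Fejér mean is convolution with the kernel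
`K_n(s) = |1 + e^{is} + ⋯ + e^{ins}|² / (n + 1)`, which is nonnegative, has mean one and is at most
`1 / ((n + 1) sin² (δ / 2))` for `δ ≤ |s| ≤ π`; with the uniform continuity of `F` this gives
uniform convergence.
-/

open Real MeasureTheory

/-- The Dirichlet kernel `D_n(u) = sin((n+1/2)u)/sin(u/2)`. -/
noncomputable def dirichlet (n : ℕ) (u : ℝ) : ℝ :=
  Real.sin (((n : ℝ) + 1 / 2) * u) / Real.sin (u / 2)

/-- The Fejér kernel `K_n = (D_0 + ⋯ + D_n)/(n+1)`. -/
noncomputable def fejer (n : ℕ) (u : ℝ) : ℝ :=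
  (1 / ((n : ℝ) + 1)) * ∑ k ∈ Finset.range (n + 1), dirichlet k u

/-- The `n`-th Fejér (Cesàro) mean of the nonlinear Fourier series of `f`. -/
noncomputable def cesaro (θ p : ℝ → ℝ) (f : ℝ → ℂ) (n : ℕ) (x : ℝ) : ℂ :=
  (1 / ((n : ℂ) + 1)) * ∑ k ∈ Finset.range (n + 1), partialSum θ p f k x

open Filter Topology Finset Function

section Periodic

variable {E : Type*} [NormedAddCommGroup E] [NormedSpace ℝ E]

theorem Function.Periodic.uniformContinuous_of_continuous {α : Type*} [UniformSpace α]
    {f : ℝ → α} {c : ℝ} (hp : Periodic f c) (hc : 0 < c) (hf : Continuous f) :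
    UniformContinuous f := by
  have : Fact (0 < c) := ⟨hc⟩
  have hlift : Continuous hp.lift := continuous_quot_lift _ hf
  exact (CompactSpace.uniformContinuous_of_continuous hlift).comp
    (AddSubgroup.zmultiples c).normedMk.uniformContinuous

theorem Function.Periodic.intervalIntegral_comp_sub_left {f : ℝ → E} {T : ℝ}
    (hf : Periodic f T) (a y : ℝ) :
    ∫ s in a..a + T, f (y - s) = ∫ s in a..a + T, f s := by
  rw [intervalIntegral.integral_comp_sub_left, show y - a = y - (a + T) + T by ring,
    hf.intervalIntegral_add_eq]

theorem Function.Periodic.intervalIntegral_deriv_smul_comp {g : ℝ → E} {T : ℝ}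
    (hg : Periodic g T) {θ θ' : ℝ → ℝ} {a b : ℝ} (hθc : ContinuousOn θ (Set.uIcc a b))
    (hθ : ∀ x ∈ Set.Ioo (min a b) (max a b), HasDerivAt θ (θ' x) x)
    (hθ' : ∀ x ∈ Set.Ioo (min a b) (max a b), 0 ≤ θ' x) (hab : θ b = θ a + T) :
    ∫ x in a..b, θ' x • g (θ x) = ∫ x in a..a + T, g x := by
  rw [← hg.intervalIntegral_add_eq (θ a) a, ← hab]
  exact intervalIntegral.integral_deriv_smul_comp_of_deriv_nonneg hθc hθ hθ'

end Periodic

theorem Continuous.surjective_of_map_add_period {θ : ℝ → ℝ} {c : ℝ} (hθ : Continuous θ)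
    (hper : ∀ t, θ (t + c) = θ t + c) (hc : c ≠ 0) : Surjective θ := by
  have hp : Periodic (fun t => θ t - t) c := fun t => by simp only [hper]; ring
  obtain ⟨B, hB⟩ := (hp.isBounded_of_continuous hc (by fun_prop)).exists_norm_le
  have hB' : ∀ t, |θ t - t| ≤ B := fun t => hB _ ⟨t, rfl⟩
  refine hθ.surjective ?_ ?_
  · refine tendsto_atTop_mono (fun t => ?_) (tendsto_atTop_add_const_right _ (-B) tendsto_id)
    show t + -B ≤ θ t
    linarith [(abs_le.1 (hB' t)).1]
  · refine tendsto_atBot_mono (fun t => ?_) (tendsto_atBot_add_const_right _ B tendsto_id)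
    show θ t ≤ t + B
    linarith [(abs_le.1 (hB' t)).2]

theorem exists_continuous_periodic_comp_eq {E : Type*} [TopologicalSpace E] {θ : ℝ → ℝ}
    {c : ℝ} (hθc : Continuous θ) (hθm : StrictMono θ) (hper : ∀ t, θ (t + c) = θ t + c)
    (hc : c ≠ 0) {f : ℝ → E} (hf : Continuous f) (hfp : Periodic f c) :
    ∃ F : ℝ → E, Continuous F ∧ Periodic F c ∧ f = F ∘ θ := by
  let e := hθm.orderIsoOfSurjective θ (hθc.surjective_of_map_add_period hper hc)
  have he : ∀ t, e t = θ t := fun _ => rfl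
  refine ⟨f ∘ e.symm, hf.comp e.symm.continuous, fun y => ?_, funext fun t => ?_⟩
  · have : e.symm (y + c) = e.symm y + c := by
      rw [e.symm_apply_eq, he, hper, ← he, e.apply_symm_apply]
    simp only [comp_apply, this, hfp _]
  · simp only [comp_apply, ← he, e.symm_apply_apply]

section FejerIdentity

variable {K : Type*}

theorem sum_Icc_neg_zpow_add_one [DivisionRing K] (z : K) (k : ℕ) :
    ∑ j ∈ Icc (-(k + 1 : ℤ)) (k + 1), z ^ j
      = ∑ j ∈ Icc (-(k : ℤ)) k, z ^ j + (z ^ (k + 1) + z⁻¹ ^ (k + 1)) := by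
  have hIcc : Icc (-(k + 1 : ℤ)) (k + 1)
      = insert (-(k + 1 : ℤ)) (insert (k + 1 : ℤ) (Icc (-(k : ℤ)) k)) := by
    ext j; simp only [mem_Icc, mem_insert]; omega
  rw [hIcc, sum_insert (by simp; omega), sum_insert (by simp), zpow_neg, ← inv_zpow]
  norm_cast
  abel

theorem sum_Icc_neg_zpow [DivisionRing K] (z : K) (n : ℕ) :
    ∑ j ∈ Icc (-(n : ℤ)) n, z ^ j = 1 + ∑ m ∈ range n, (z ^ (m + 1) + z⁻¹ ^ (m + 1)) := by
  induction n with
  | zero => simp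
  | succ n ih =>
    push_cast
    rw [sum_Icc_neg_zpow_add_one, ih, sum_range_succ, add_assoc]

theorem pow_mul_sum_range_inv_pow [Field K] {z : K} (hz : z ≠ 0) (n : ℕ) :
    z ^ (n + 1) * ∑ j ∈ range (n + 1), z⁻¹ ^ j = ∑ m ∈ range (n + 1), z ^ (m + 1) := by
  rw [mul_sum, ← sum_range_reflect]
  refine sum_congr rfl fun m hm => ?_
  obtain ⟨k, rfl⟩ := Nat.exists_eq_add_of_le (Nat.lt_succ_iff.mp (mem_range.mp hm))
  rw [show m + k + 1 - 1 - m = k by omega, show m + k + 1 = (m + 1) + k by ring, pow_add,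
    mul_assoc, ← mul_pow, mul_inv_cancel₀ hz, one_pow, mul_one]

-- Fejér's identity: on the unit circle the right side is `|1 + z + ⋯ + zⁿ|²`.
theorem sum_range_sum_Icc_zpow [Field K] {z : K} (hz : z ≠ 0) (n : ℕ) :
    ∑ k ∈ range (n + 1), ∑ j ∈ Icc (-(k : ℤ)) k, z ^ j
      = (∑ j ∈ range (n + 1), z ^ j) * ∑ j ∈ range (n + 1), z⁻¹ ^ j := by
  induction n with
  | zero => simp
  | succ n ih =>
    have hD : ∑ j ∈ Icc (-((n + 1 : ℕ) : ℤ)) (n + 1 : ℕ), z ^ j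
        = z ^ (n + 1) * ∑ j ∈ range (n + 1), z⁻¹ ^ j
          + z⁻¹ ^ (n + 1) * ∑ j ∈ range (n + 1), z ^ j + 1 := by
      have hinv := pow_mul_sum_range_inv_pow (inv_ne_zero hz) n
      rw [inv_inv] at hinv
      rw [sum_Icc_neg_zpow, pow_mul_sum_range_inv_pow hz, hinv, sum_add_distrib]
      ring
    rw [sum_range_succ, ih, hD, sum_range_succ _ (n + 1), sum_range_succ _ (n + 1)]
    have : z ^ (n + 1) * z⁻¹ ^ (n + 1) = 1 := by rw [← mul_pow, mul_inv_cancel₀ hz, one_pow]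
    linear_combination -this

end FejerIdentity

-- Equal to `fejer n s` wherever `sin (s / 2) ≠ 0`, but continuous (`fejer n` is junk on `2πℤ`).
noncomputable def fejerKernel (n : ℕ) (s : ℝ) : ℝ :=
  ‖∑ j ∈ range (n + 1), Complex.exp (Complex.I * s) ^ j‖ ^ 2 / (n + 1)

theorem fejerKernel_nonneg (n : ℕ) (s : ℝ) : 0 ≤ fejerKernel n s := by
  unfold fejerKernel; positivity

@[fun_prop]
theorem continuous_fejerKernel (n : ℕ) : Continuous (fejerKernel n) := by
  unfold fejerKernel; fun_prop

theorem periodic_exp_I_mul_intCast_mul (k : ℤ) :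
    Periodic (fun t : ℝ => Complex.exp (Complex.I * k * t)) (2 * π) := fun t => by
  simp only
  rw [show Complex.I * k * (t + 2 * π : ℝ) = Complex.I * k * t + k * (2 * π * Complex.I) by
    push_cast; ring, Complex.exp_periodic.int_mul]

theorem exp_I_mul_intCast_mul_eq_zpow (j : ℤ) (s : ℝ) :
    Complex.exp (Complex.I * j * s) = Complex.exp (Complex.I * s) ^ j := by
  rw [← Complex.exp_int_mul]; ring_nf

theorem ofReal_fejerKernel (n : ℕ) (s : ℝ) :
    (fejerKernel n s : ℂ) = 1 / (n + 1) *
      ∑ k ∈ range (n + 1), ∑ j ∈ Icc (-(k : ℤ)) k, Complex.exp (Complex.I * j * s) := by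
  simp_rw [exp_I_mul_intCast_mul_eq_zpow, sum_range_sum_Icc_zpow (Complex.exp_ne_zero _),
    Complex.inv_eq_conj (Complex.norm_exp_I_mul_ofReal s), ← map_pow, ← map_sum,
    Complex.mul_conj', fejerKernel]
  push_cast
  ring

theorem integral_exp_I_mul_intCast_mul (j : ℤ) :
    ∫ s in (-π)..π, Complex.exp (Complex.I * j * s) = if j = 0 then (2 * π : ℂ) else 0 := by
  split_ifs with hj
  · simp [hj]; ring
  · have hc : Complex.I * j ≠ 0 := mul_ne_zero Complex.I_ne_zero (by exact_mod_cast hj)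
    rw [integral_exp_mul_complex hc, div_eq_zero_iff, sub_eq_zero]
    left
    rw [show Complex.I * j * (π : ℝ) = Complex.I * j * (-π : ℝ) + j * (2 * π * Complex.I) by
      push_cast; ring, Complex.exp_periodic.int_mul j]

theorem integral_fejerKernel (n : ℕ) : ∫ s in (-π)..π, fejerKernel n s = 2 * π := by
  apply Complex.ofReal_injective
  rw [← intervalIntegral.integral_ofReal]
  simp_rw [ofReal_fejerKernel]
  rw [intervalIntegral.integral_const_mul, intervalIntegral.integral_finsetSum
      fun k _ => Continuous.intervalIntegrable (by fun_prop) _ _,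
    sum_congr rfl fun k _ => intervalIntegral.integral_finsetSum
      fun j _ => Continuous.intervalIntegrable (by fun_prop) _ _]
  simp [integral_exp_I_mul_intCast_mul]
  field_simp

theorem fejerKernel_le {n : ℕ} {δ s : ℝ} (hδ : 0 < δ) (hδs : δ ≤ |s|) (hs : |s| ≤ π) :
    fejerKernel n s ≤ (Real.sin (δ / 2) ^ 2)⁻¹ / (n + 1) := by
  have hsin_pos : 0 < Real.sin (δ / 2) := Real.sin_pos_of_pos_of_lt_pi (by linarith) (by linarith)
  have hsin : Real.sin (δ / 2) ≤ |Real.sin (s / 2)| := by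
    have : |Real.sin (s / 2)| = Real.sin (|s| / 2) := by
      rcases abs_cases s with ⟨h, -⟩ | ⟨h, -⟩
      · rw [h, abs_of_nonneg (Real.sin_nonneg_of_nonneg_of_le_pi (by linarith) (by linarith))]
      · rw [h, neg_div, Real.sin_neg, abs_of_nonpos
          (Real.sin_nonpos_of_nonpos_of_neg_pi_le (by linarith) (by linarith))]
    rw [this]
    exact Real.sin_le_sin_of_le_of_le_pi_div_two (by linarith) (by linarith) (by linarith)
  set z := Complex.exp (Complex.I * s)
  have hz1 : ‖z - 1‖ = 2 * |Real.sin (s / 2)| := by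
    rw [Complex.norm_exp_I_mul_ofReal_sub_one, norm_mul, Real.norm_eq_abs, Real.norm_eq_abs,
      abs_two]
  have hz1_pos : 0 < ‖z - 1‖ := by rw [hz1]; linarith
  have hgeom : ‖∑ j ∈ range (n + 1), z ^ j‖ ≤ (Real.sin (δ / 2))⁻¹ := by
    rw [geom_sum_eq (sub_ne_zero.mp (norm_pos_iff.mp hz1_pos)), norm_div]
    calc ‖z ^ (n + 1) - 1‖ / ‖z - 1‖ ≤ 2 / ‖z - 1‖ := by
          gcongr
          refine (norm_sub_le _ _).trans ?_
          rw [norm_pow, Complex.norm_exp_I_mul_ofReal]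
          norm_num
      _ ≤ (Real.sin (δ / 2))⁻¹ := by
          rw [hz1, div_le_iff₀ (by linarith)]
          field_simp
          linarith
  rw [← inv_pow]
  unfold fejerKernel
  gcongr

-- With `θ = id` and weight `1`, `coeff` and `cesaro` are the classical Fourier coefficients and
-- Fejér means on `[-π, π]`.
theorem coeff_id_one_mul_exp {F : ℝ → ℂ} (hF : Periodic F (2 * π)) (j : ℤ) (y : ℝ) :
    coeff id 1 F j * Complex.exp (Complex.I * j * y)
      = 1 / (2 * π) * ∫ s in (-π)..π, F (y - s) * Complex.exp (Complex.I * j * s) := by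
  set g : ℝ → ℂ := fun t => F t * Complex.exp (Complex.I * j * (y - t : ℝ))
  have hg : Periodic g (2 * π) := hF.mul ((periodic_exp_I_mul_intCast_mul j).const_sub y)
  have hshift := hg.intervalIntegral_comp_sub_left (-π) y
  rw [show -π + 2 * π = π by ring] at hshift
  calc coeff id 1 F j * Complex.exp (Complex.I * j * y)
      = 1 / (2 * π) * ∫ t in (-π)..π, g t := by
        rw [coeff, mul_assoc, ← intervalIntegral.integral_mul_const]
        congr 1
        refine intervalIntegral.integral_congr fun t _ => ?_
        simp only [g, id, Pi.one_apply, Complex.ofReal_one, mul_one, mul_assoc,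
          ← Complex.exp_add]
        push_cast
        ring_nf
    _ = 1 / (2 * π) * ∫ s in (-π)..π, F (y - s) * Complex.exp (Complex.I * j * s) := by
        rw [← hshift]
        simp only [g, sub_sub_cancel]

theorem cesaro_id_one_eq_integral {F : ℝ → ℂ} (hF : Continuous F) (hFp : Periodic F (2 * π))
    (n : ℕ) (y : ℝ) :
    cesaro id 1 F n y = 1 / (2 * π) * ∫ s in (-π)..π, F (y - s) * fejerKernel n s := by
  simp only [cesaro, partialSum, id, coeff_id_one_mul_exp hFp, ofReal_fejerKernel, mul_sum]
  rw [intervalIntegral.integral_finsetSum fun k _ =>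
    Continuous.intervalIntegrable (by fun_prop) _ _, mul_sum]
  refine sum_congr rfl fun k _ => ?_
  rw [intervalIntegral.integral_finsetSum fun j _ =>
    Continuous.intervalIntegrable (by fun_prop) _ _, mul_sum]
  refine sum_congr rfl fun j _ => ?_
  simp_rw [mul_left_comm (F _), intervalIntegral.integral_const_mul]
  ring

theorem norm_intervalIntegral_mul_kernel_le {G : ℝ → ℂ} {K : ℝ → ℝ} {a b δ ε M η : ℝ}
    (hab : a ≤ b) (hG : Continuous G) (hK : Continuous K) (hK0 : ∀ s, 0 ≤ K s) (hε : 0 ≤ ε)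
    (hη : 0 ≤ η) (hGM : ∀ s, ‖G s‖ ≤ M) (hGδ : ∀ s, |s| ≤ δ → ‖G s‖ ≤ ε)
    (hKδ : ∀ s ∈ Set.Icc a b, δ ≤ |s| → K s ≤ η) :
    ‖∫ s in a..b, G s * K s‖ ≤ ε * (∫ s in a..b, K s) + (b - a) * (M * η) := by
  have hM : 0 ≤ M := (norm_nonneg _).trans (hGM 0)
  have hpointwise : ∀ s ∈ Set.Icc a b, ‖G s * K s‖ ≤ ε * K s + M * η := fun s hs => by
    rw [norm_mul, Complex.norm_real, Real.norm_of_nonneg (hK0 s)]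
    rcases le_total |s| δ with h | h
    · nlinarith [hGδ s h, hK0 s, mul_nonneg hM hη]
    · nlinarith [hGM s, hKδ s hs h, hK0 s, norm_nonneg (G s)]
  calc ‖∫ s in a..b, G s * K s‖ ≤ ∫ s in a..b, ‖G s * K s‖ :=
        intervalIntegral.norm_integral_le_integral_norm hab
    _ ≤ ∫ s in a..b, (ε * K s + M * η) :=
        intervalIntegral.integral_mono_on hab (Continuous.intervalIntegrable (by fun_prop) _ _)
          (Continuous.intervalIntegrable (by fun_prop) _ _) hpointwise
    _ = ε * (∫ s in a..b, K s) + (b - a) * (M * η) := by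
        rw [intervalIntegral.integral_add (Continuous.intervalIntegrable (by fun_prop) _ _)
          intervalIntegrable_const, intervalIntegral.integral_const_mul,
          intervalIntegral.integral_const, smul_eq_mul]

theorem norm_sub_cesaro_id_one_le {F : ℝ → ℂ} (hF : Continuous F) (hFp : Periodic F (2 * π))
    {M δ ε : ℝ} (hM : ∀ y, ‖F y‖ ≤ M) (hδ : 0 < δ) (hε : 0 ≤ ε)
    (hFδ : ∀ y s, |s| ≤ δ → ‖F y - F (y - s)‖ ≤ ε) (n : ℕ) (y : ℝ) :
    ‖F y - cesaro id 1 F n y‖ ≤ ε + 2 * M * ((Real.sin (δ / 2) ^ 2)⁻¹ / (n + 1)) := by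
  have hrepr : F y - cesaro id 1 F n y
      = 1 / (2 * π) * ∫ s in (-π)..π, (F y - F (y - s)) * fejerKernel n s := by
    simp_rw [cesaro_id_one_eq_integral hF hFp, sub_mul]
    rw [intervalIntegral.integral_sub (Continuous.intervalIntegrable (by fun_prop) _ _)
      (Continuous.intervalIntegrable (by fun_prop) _ _), intervalIntegral.integral_const_mul,
      intervalIntegral.integral_ofReal, integral_fejerKernel]
    field_simp
    push_cast
    ring
  have hbound := norm_intervalIntegral_mul_kernel_le (G := fun s => F y - F (y - s))
    (K := fejerKernel n) (M := 2 * M) (by linarith [pi_pos]) (by fun_prop)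
    (continuous_fejerKernel n) (fejerKernel_nonneg n) hε (by positivity)
    (fun s => (norm_sub_le _ _).trans (by linarith [hM y, hM (y - s)])) (hFδ y)
    (fun s hs hδs => fejerKernel_le hδ hδs (abs_le.2 hs))
  rw [integral_fejerKernel] at hbound
  rw [hrepr, norm_mul, norm_div, norm_one, Complex.norm_mul, Complex.norm_ofNat,
    Complex.norm_real, Real.norm_of_nonneg pi_pos.le]
  calc 1 / (2 * π) * ‖∫ s in (-π)..π, (F y - F (y - s)) * fejerKernel n s‖
      ≤ 1 / (2 * π) *
          (ε * (2 * π) + (π - -π) * (2 * M * ((Real.sin (δ / 2) ^ 2)⁻¹ / (n + 1)))) := by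
        gcongr
    _ = ε + 2 * M * ((Real.sin (δ / 2) ^ 2)⁻¹ / (n + 1)) := by
        field_simp
        ring

theorem tendsto_iSup_norm_sub_cesaro_id_one {F : ℝ → ℂ} (hF : Continuous F)
    (hFp : Periodic F (2 * π)) :
    Tendsto (fun n : ℕ => ⨆ y, ‖F y - cesaro id 1 F n y‖) atTop (𝓝 0) := by
  obtain ⟨M, hM⟩ := (hFp.isBounded_of_continuous (by positivity) hF).exists_norm_le
  replace hM : ∀ y, ‖F y‖ ≤ M := fun y => hM _ ⟨y, rfl⟩
  have hM0 : 0 ≤ M := (norm_nonneg _).trans (hM 0)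
  refine tendsto_order.2 ⟨fun c hc => .of_forall fun n =>
    hc.trans_le (Real.iSup_nonneg fun _ => norm_nonneg _), fun ε hε => ?_⟩
  obtain ⟨δ, hδ, hFδ⟩ :=
    Metric.uniformContinuous_iff_le.1 (hFp.uniformContinuous_of_continuous (by positivity) hF)
      (ε / 2) (half_pos hε)
  have hlim : Tendsto (fun n : ℕ => ε / 2 + 2 * M * ((Real.sin (δ / 2) ^ 2)⁻¹ / (n + 1)))
      atTop (𝓝 (ε / 2)) := by
    simpa [div_eq_mul_one_div ((Real.sin (δ / 2) ^ 2)⁻¹)] using tendsto_const_nhds.add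
      ((tendsto_one_div_add_atTop_nhds_zero_nat.const_mul (Real.sin (δ / 2) ^ 2)⁻¹).const_mul
        (2 * M))
  filter_upwards [hlim.eventually (gt_mem_nhds (half_lt_self hε))] with n hn
  refine (Real.iSup_le (fun y => norm_sub_cesaro_id_one_le hF hFp hM hδ (half_pos hε).le
    (fun y s hs => ?_) n y) (by positivity)).trans_lt hn
  rw [← dist_eq_norm]
  exact hFδ (by rwa [Real.dist_eq, sub_sub_cancel])

section Reparametrization

variable {θ θ' : ℝ → ℝ} {F : ℝ → ℂ}

theorem coeff_comp (hθc : Continuous θ) (hθ : ∀ t, HasDerivAt θ (θ' t) t) (hθ' : ∀ t, 0 ≤ θ' t)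
    (hper : θ π = θ (-π) + 2 * π) (hF : Periodic F (2 * π)) (k : ℤ) :
    coeff θ θ' (F ∘ θ) k = coeff id 1 F k := by
  set g : ℝ → ℂ := fun u => F u * Complex.exp (Complex.I * (-k : ℤ) * u)
  have hg : Periodic g (2 * π) := hF.mul (periodic_exp_I_mul_intCast_mul (-k))
  have hcov := hg.intervalIntegral_deriv_smul_comp hθc.continuousOn (fun t _ => hθ t)
    (fun t _ => hθ' t) hper
  rw [show -π + 2 * π = π by ring] at hcov
  calc coeff θ θ' (F ∘ θ) k = 1 / (2 * π) * ∫ t in (-π)..π, θ' t • g (θ t) := by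
        refine congrArg _ (intervalIntegral.integral_congr fun t _ => ?_)
        simp only [g, comp_apply, Complex.real_smul, Int.cast_neg, mul_neg, neg_mul]
        ring
    _ = coeff id 1 F k := by
        rw [hcov]
        refine congrArg _ (intervalIntegral.integral_congr fun t _ => ?_)
        simp only [g, id, Pi.one_apply, Complex.ofReal_one, mul_one, Int.cast_neg, mul_neg,
          neg_mul]

theorem cesaro_comp (hθc : Continuous θ) (hθ : ∀ t, HasDerivAt θ (θ' t) t)
    (hθ' : ∀ t, 0 ≤ θ' t) (hper : θ π = θ (-π) + 2 * π) (hF : Periodic F (2 * π)) (n : ℕ)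
    (x : ℝ) : cesaro θ θ' (F ∘ θ) n x = cesaro id 1 F n (θ x) := by
  simp only [cesaro, partialSum, coeff_comp hθc hθ hθ' hper hF, id]

end Reparametrization

theorem fejer_theorem_nonlinear_fourier_general
    (a : ℂ) (ta : ℝ)
    (θ : ℝ → ℝ) (hθc : Continuous θ) (hθm : StrictMono θ)
    (hper : ∀ t : ℝ, θ (t + 2 * π) = θ t + 2 * π)
    (hderiv : ∀ t : ℝ, HasDerivAt θ (poisson a ta t) t)
    (f : ℝ → ℂ) (hf : Continuous f) (hfper : Function.Periodic f (2 * π)) :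
    Filter.Tendsto
      (fun n : ℕ => ⨆ x : ℝ, ‖f x - cesaro θ (poisson a ta) f n x‖)
      Filter.atTop (nhds 0) := by
  have h2π : (2 * π) ≠ 0 := by positivity
  obtain ⟨F, hF, hFp, rfl⟩ := exists_continuous_periodic_comp_eq hθc hθm hper h2π hf hfper
  have hpoisson_nonneg : ∀ t, 0 ≤ poisson a ta t := fun t =>
    (hderiv t).deriv ▸ hθm.monotone.deriv_nonneg
  have hθπ : θ π = θ (-π) + 2 * π := by rw [← hper]; ring_nf
  simp only [comp_apply, cesaro_comp hθc hderiv hpoisson_nonneg hθπ hFp]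
  have hsup : ∀ n, ⨆ x, ‖F (θ x) - cesaro id 1 F n (θ x)‖ = ⨆ y, ‖F y - cesaro id 1 F n y‖ :=
    fun n => (hθc.surjective_of_map_add_period hper h2π).iSup_comp
      fun y => ‖F y - cesaro id 1 F n y‖
  simp only [hsup]
  exact tendsto_iSup_norm_sub_cesaro_id_one hF hFp

theorem fejer_theorem_nonlinear_fourier
    (a : ℂ) (ha : ‖a‖ < 1) (ta : ℝ) (hA : a = (‖a‖ : ℂ) * Complex.exp (Complex.I * (ta : ℂ)))
    (θ : ℝ → ℝ) (hθc : Continuous θ) (hθm : StrictMono θ)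
    (hper : ∀ t : ℝ, θ (t + 2 * π) = θ t + 2 * π)
    (hderiv : ∀ t : ℝ, HasDerivAt θ (poisson a ta t) t)
    (f : ℝ → ℂ) (hf : Continuous f) (hfper : Function.Periodic f (2 * π)) :
    Filter.Tendsto
      (fun n : ℕ => ⨆ x : ℝ, ‖f x - cesaro θ (poisson a ta) f n x‖)
      Filter.atTop (nhds 0) :=
  fejer_theorem_nonlinear_fourier_general a ta θ hθc hθm hper hderiv f hf hfper
end
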